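/- arXiv:2004.00829 — 3 statements merged into one kernel-verified Lean document; each statement's English description precedes it below -/
import Mathlib

section
/- For every ξ ∈ (0,∞), the operator A_ξ respects even–odd parity (it maps even functions to even functions and odd functions to odd functions), and the convex cones 𝒩 and 𝒰 are invariant under A_ξ: if v ∈ 𝒩 then A_ξ v ∈ 𝒩, and if u ∈ 𝒰 then A_ξ u ∈ 𝒰. -/
/-!
Parity: since `a` and `χ_ξ` are even, the substitution `y ↦ -y` in the convolution integral
shows that `A_ξ` maps even functions to even ones and odd functions to odd ones.

Cone invariance rests on a symmetrization: if `∫ g` is finite then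
`2 ∫ g = ∫ (g(y) + g(c - y)) dy`, so it suffices to control the paired integrand.
For odd `w ≤ 0` on `(0, ∞)` and `x > 0`, pairing `y` with `-y` in `(a ∗ w)(x)` gives
`(a(x - y) - a(x + y)) w(y) ≤ 0`, because `a` decreases in `|·|`. For even unimodal `w` and
`0 ≤ x₁ ≤ x₂`, pairing `y` with `x₁ + x₂ - y` in `(a ∗ w)(x₁) - (a ∗ w)(x₂)` gives
`(a(x₁ - y) - a(x₂ - y)) (w(y) - w(x₁ + x₂ - y))`, a product of two factors whose signs both
change at `y = (x₁ + x₂)/2`. Truncation by `χ_ξ` preserves parity, sign and unimodality,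
and `A_ξ v ∈ L²` because `a ∗ (χ_ξ v)` is bounded by `sup |a| · ‖χ_ξ v‖₁`.
-/

open MeasureTheory Filter Set

noncomputable section

/-- Convolution of two real functions on `ℝ`: `(a ∗ w)(x) = ∫ a(x − y) w(y) dy`. -/
def conv (a w : ℝ → ℝ) : ℝ → ℝ := fun x => ∫ y, a (x - y) * w y

/-- `χ_ξ`, the indicator function of the interval `I_ξ = [−ξ, ξ]`. -/
def chi (ξ : ℝ) : ℝ → ℝ := Set.indicator (Set.Icc (-ξ) ξ) (fun _ => (1 : ℝ))

/-- The modified convolution operator `A_ξ v := χ_ξ · (a ∗ (χ_ξ · v))`. -/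
def Axi (a : ℝ → ℝ) (ξ : ℝ) (v : ℝ → ℝ) : ℝ → ℝ :=
  fun x => chi ξ x * conv a (fun y => chi ξ y * v y) x

/-- The quadratic functional `F_ξ(v) := ½ ⟨χ_ξ·v, a ∗ (χ_ξ·v)⟩` in `L²(ℝ)`. -/
def Fxi (a : ℝ → ℝ) (ξ : ℝ) (v : ℝ → ℝ) : ℝ :=
  (1 / 2) * ∫ x, (chi ξ x * v x) * conv a (fun y => chi ξ y * v y) x

/-- Standing assumptions on the convolution kernel `a`:
integrable, square integrable, bounded, even, nonnegative, nonincreasing on `[0,∞)`,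
with total integral one. -/
structure KernelHyp (a : ℝ → ℝ) : Prop where
  integrable : Integrable a
  memL2 : MemLp a 2 volume
  bounded : ∃ C : ℝ, ∀ x, |a x| ≤ C
  even : ∀ x, a (-x) = a x
  nonneg : ∀ x, 0 ≤ a x
  antitone : AntitoneOn a (Set.Ici 0)
  mass_one : (∫ x, a x) = 1

/-- Strict unimodality: `a` is differentiable with `a′(x) < 0` for all `x > 0`. -/
def StrictKernel (a : ℝ → ℝ) : Prop :=
  Differentiable ℝ a ∧ ∀ x, 0 < x → deriv a x < 0

/-- The cone `𝒰` of even, nonnegative, unimodal functions in `L²(ℝ)`. -/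
def coneU (u : ℝ → ℝ) : Prop :=
  MemLp u 2 volume ∧ (∀ x, u (-x) = u x) ∧ (∀ x, 0 ≤ u x) ∧
    AntitoneOn u (Set.Ici 0)

/-- The cone `𝒩` of odd functions in `L²(ℝ)` that are nonpositive on `(0,∞)`. -/
def coneN (v : ℝ → ℝ) : Prop :=
  MemLp v 2 volume ∧ (∀ x, v (-x) = -v x) ∧ ∀ x, 0 < x → v x ≤ 0

/-- The refined cone `𝒩̃_ξ`: elements of `𝒩` that are `C¹` on `I_ξ`, with negative
derivative at `0`, strictly negative on `(0, ξ]` and vanishing beyond `ξ`. -/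
def coneNtilde (ξ : ℝ) (v : ℝ → ℝ) : Prop :=
  coneN v ∧ ContDiffOn ℝ 1 v (Set.Icc (-ξ) ξ) ∧ deriv v 0 < 0 ∧
    (∀ x, 0 < x → x ≤ ξ → v x < 0) ∧ ∀ x, ξ < x → v x = 0

/-- The set of Rayleigh quotients `2 F_ξ(v)` over normalized odd `v ∈ L²(ℝ)`. -/
def rayleighSet (a : ℝ → ℝ) (ξ : ℝ) : Set ℝ :=
  {l | ∃ v : ℝ → ℝ, MemLp v 2 volume ∧ (∀ x, v (-x) = -v x) ∧
    (∫ x, (v x) ^ 2) = 1 ∧ l = 2 * Fxi a ξ v}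

/-- `λ_ξ`, the largest eigenvalue of `A_ξ` on `L²_odd(ℝ)`, characterized variationally
as the supremum of the Rayleigh quotients. -/
def lamXi (a : ℝ → ℝ) (ξ : ℝ) : ℝ := sSup (rayleighSet a ξ)

/-- `convPow a k` is the `(k+1)`-fold convolution power `a^{∗(k+1)}`. -/
def convPow (a : ℝ → ℝ) : ℕ → (ℝ → ℝ)
  | 0 => a
  | (k + 1) => conv a (convPow a k)

/-- The transformed kernel `ã := (1 − μ) Σ_{k≥0} μ^k a^{∗(k+1)}`. -/
def tildeKernel (a : ℝ → ℝ) (μ : ℝ) : ℝ → ℝ :=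
  fun x => (1 - μ) * ∑' k : ℕ, μ ^ k * convPow a k x

/-- The bilinear nonlinearity `f(r) = ζ r + η max(r − θ, 0)`. -/
def bilin (ζ θ η r : ℝ) : ℝ := ζ * r + η * max (r - θ) 0

open Function
open scoped ENNReal

lemma Function.Even.le_of_abs_le_abs {f : ℝ → ℝ} (hf : f.Even) (hm : AntitoneOn f (Ici 0))
    {s t : ℝ} (h : |s| ≤ |t|) : f t ≤ f s := by
  have h_abs : ∀ x, f |x| = f x := fun x => by
    rcases abs_choice x with hx | hx <;> rw [hx]
    exact hf x
  rw [← h_abs s, ← h_abs t]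
  exact hm (abs_nonneg s) (abs_nonneg t) h

lemma integral_nonneg_of_add_comp_sub_left_nonneg {g : ℝ → ℝ} (hg : Integrable g) (c : ℝ)
    (h : ∀ y, 0 ≤ g y + g (c - y)) : 0 ≤ ∫ y, g y := by
  have h_two : ∫ y, (g y + g (c - y)) = 2 * ∫ y, g y := by
    rw [integral_add hg (hg.comp_sub_left c), integral_sub_left_eq_self g volume c]
    ring
  have h_nonneg : 0 ≤ ∫ y, (g y + g (c - y)) := integral_nonneg h
  linarith

section Convolution

variable {a w : ℝ → ℝ}

lemma integrable_conv_integrand (ha : MemLp a 2 volume) (hw : MemLp w 2 volume) (x : ℝ) :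
    Integrable (fun y => a (x - y) * w y) :=
  (ha.comp_measurePreserving (Measure.measurePreserving_sub_left volume x)).integrable_mul hw

lemma aestronglyMeasurable_conv (ha : AEStronglyMeasurable a volume)
    (hw : AEStronglyMeasurable w volume) : AEStronglyMeasurable (conv a w) volume := by
  have h := (hw.convolution_integrand (ContinuousLinearMap.mul ℝ ℝ) ha).integral_prod_right'
  simp only [ContinuousLinearMap.mul_apply', mul_comm (w _)] at h
  exact h

lemma abs_conv_le {C : ℝ} (hC : ∀ x, |a x| ≤ C) (hw : Integrable w) (x : ℝ) :
    |conv a w x| ≤ C * ∫ y, |w y| := by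
  calc |conv a w x| = ‖∫ y, a (x - y) * w y‖ := (Real.norm_eq_abs _).symm
    _ ≤ ∫ y, C * |w y| :=
        norm_integral_le_of_norm_le (hw.abs.const_mul C) (Eventually.of_forall fun y => by
          rw [Real.norm_eq_abs, abs_mul]
          exact mul_le_mul_of_nonneg_right (hC _) (abs_nonneg _))
    _ = C * ∫ y, |w y| := integral_const_mul C _

lemma conv_neg (ha : a.Even) (x : ℝ) : conv a w (-x) = ∫ y, a (x - y) * w (-y) := by
  rw [conv, ← integral_neg_eq_self]
  simp only [show ∀ y, -x - -y = -(x - y) by intro y; ring, ha.eq]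

lemma Function.Even.conv_even (ha : a.Even) (hw : w.Even) : (conv a w).Even := fun x => by
  simp only [conv_neg ha, hw.eq]
  rfl

lemma Function.Even.conv_odd (ha : a.Even) (hw : w.Odd) : (conv a w).Odd := fun x => by
  simp only [conv_neg ha, hw.eq, mul_neg, integral_neg]
  rfl

lemma conv_nonneg (ha : ∀ x, 0 ≤ a x) (hw : ∀ x, 0 ≤ w x) (x : ℝ) : 0 ≤ conv a w x :=
  integral_nonneg fun _ => mul_nonneg (ha _) (hw _)

lemma conv_nonpos_of_odd (ha2 : MemLp a 2 volume) (ha : a.Even) (ham : AntitoneOn a (Ici 0))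
    (hw2 : MemLp w 2 volume) (hw : w.Odd) (hwn : ∀ y, 0 < y → w y ≤ 0) {x : ℝ} (hx : 0 < x) :
    conv a w x ≤ 0 := by
  have hwp : ∀ y, y ≤ 0 → 0 ≤ w y := fun y hy => by
    rcases hy.lt_or_eq with hy | rfl
    · linarith [hw.eq y ▸ hwn (-y) (neg_pos.2 hy)]
    · rw [hw.map_zero]
  have h_pair : ∀ y, 0 ≤ -(a (x - y) * w y) + -(a (x - (0 - y)) * w (0 - y)) := fun y => by
    rw [zero_sub, sub_neg_eq_add, hw.eq,
      show -(a (x - y) * w y) + -(a (x + y) * -w y) = (a (x + y) - a (x - y)) * w y by ring]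
    rcases le_or_gt y 0 with hy | hy
    · exact mul_nonneg (sub_nonneg.2 (ha.le_of_abs_le_abs ham (sq_le_sq.1 (by nlinarith))))
        (hwp y hy)
    · exact mul_nonneg_of_nonpos_of_nonpos
        (sub_nonpos.2 (ha.le_of_abs_le_abs ham (sq_le_sq.1 (by nlinarith)))) (hwn y hy)
  have hg : Integrable (fun y => -(a (x - y) * w y)) := (integrable_conv_integrand ha2 hw2 x).neg
  have h := integral_nonneg_of_add_comp_sub_left_nonneg hg 0 h_pair
  rw [integral_neg] at h
  exact neg_nonneg.1 h

lemma antitoneOn_conv (ha2 : MemLp a 2 volume) (ha : a.Even) (ham : AntitoneOn a (Ici 0))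
    (hw2 : MemLp w 2 volume) (hw : w.Even) (hwm : AntitoneOn w (Ici 0)) :
    AntitoneOn (conv a w) (Ici 0) := by
  intro x₁ hx₁ x₂ hx₂ hx
  rw [mem_Ici] at hx₁ hx₂
  set g : ℝ → ℝ := fun y => a (x₁ - y) * w y - a (x₂ - y) * w y
  have hg : Integrable g :=
    (integrable_conv_integrand ha2 hw2 x₁).sub (integrable_conv_integrand ha2 hw2 x₂)
  have h_pair : ∀ y, 0 ≤ g y + g (x₁ + x₂ - y) := fun y => by
    have h_eq : g y + g (x₁ + x₂ - y) = (a (x₁ - y) - a (x₂ - y)) * (w y - w (x₁ + x₂ - y)) := by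
      simp only [g, show x₁ - (x₁ + x₂ - y) = -(x₂ - y) by ring,
        show x₂ - (x₁ + x₂ - y) = -(x₁ - y) by ring, ha.eq]
      ring
    rw [h_eq]
    rcases le_total (2 * y) (x₁ + x₂) with hy | hy
    · exact mul_nonneg
        (sub_nonneg.2 (ha.le_of_abs_le_abs ham (sq_le_sq.1 (by nlinarith))))
        (sub_nonneg.2 (hw.le_of_abs_le_abs hwm (sq_le_sq.1 (by nlinarith))))
    · exact mul_nonneg_of_nonpos_of_nonpos
        (sub_nonpos.2 (ha.le_of_abs_le_abs ham (sq_le_sq.1 (by nlinarith))))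
        (sub_nonpos.2 (hw.le_of_abs_le_abs hwm (sq_le_sq.1 (by nlinarith))))
  have h_diff : conv a w x₁ - conv a w x₂ = ∫ y, g y := by
    rw [conv, conv, ← integral_sub (integrable_conv_integrand ha2 hw2 x₁)
      (integrable_conv_integrand ha2 hw2 x₂)]
  linarith [integral_nonneg_of_add_comp_sub_left_nonneg hg (x₁ + x₂) h_pair]

end Convolution

lemma chi_even (ξ : ℝ) : (chi ξ).Even := fun x => by
  simp only [chi, indicator, mem_Icc, neg_le_neg_iff, neg_le, and_comm]

lemma chi_nonneg (ξ x : ℝ) : 0 ≤ chi ξ x :=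
  indicator_nonneg (fun _ _ => zero_le_one) x

lemma memLp_top_chi (ξ : ℝ) : MemLp (chi ξ) ∞ volume :=
  memLp_top_of_bound (aestronglyMeasurable_const.indicator measurableSet_Icc) 1
    (Eventually.of_forall fun x => by
      rw [Real.norm_eq_abs, abs_of_nonneg (chi_nonneg ξ x)]
      exact indicator_le_self' (fun _ _ => zero_le_one) x)

lemma memLp_two_chi (ξ : ℝ) : MemLp (chi ξ) 2 volume :=
  memLp_indicator_const 2 measurableSet_Icc 1 (Or.inr (by simp))

lemma antitoneOn_chi_mul {ξ : ℝ} {f : ℝ → ℝ} (hf : ∀ x, 0 ≤ f x) (hm : AntitoneOn f (Ici 0)) :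
    AntitoneOn (chi ξ * f) (Ici 0) := by
  intro x₁ hx₁ x₂ hx₂ hx
  rw [mem_Ici] at hx₁ hx₂
  by_cases hx₂ξ : x₂ ≤ ξ
  · have h_one : ∀ x, 0 ≤ x → x ≤ ξ → chi ξ x = 1 := fun x h₀ hξ =>
      indicator_of_mem (mem_Icc.2 ⟨by linarith, hξ⟩) _
    simp only [Pi.mul_apply, h_one x₁ hx₁ (hx.trans hx₂ξ), h_one x₂ hx₂ hx₂ξ, one_mul]
    exact hm hx₁ hx₂ hx
  · simp only [Pi.mul_apply, chi, indicator_of_notMem (fun h => hx₂ξ (mem_Icc.1 h).2), zero_mul]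
    exact mul_nonneg (chi_nonneg ξ x₁) (hf x₁)

lemma memLp_two_Axi {a : ℝ → ℝ} {C : ℝ} (ha : AEStronglyMeasurable a volume)
    (hC : ∀ x, |a x| ≤ C) (ξ : ℝ) {v : ℝ → ℝ} (hv : MemLp v 2 volume) :
    MemLp (Axi a ξ v) 2 volume := by
  have hw : Integrable (chi ξ * v) := (memLp_two_chi ξ).integrable_mul hv
  have h_conv : MemLp (conv a (chi ξ * v)) ∞ volume :=
    memLp_top_of_bound (aestronglyMeasurable_conv ha hw.1) _
      (Eventually.of_forall (abs_conv_le hC hw))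
  exact h_conv.mul (memLp_two_chi ξ)

theorem stmt1_general (a : ℝ → ℝ) (hk : KernelHyp a) (ξ : ℝ) :
    (∀ v : ℝ → ℝ, MemLp v 2 volume → (∀ x, v (-x) = v x) →
      ∀ x, Axi a ξ v (-x) = Axi a ξ v x) ∧
    (∀ v : ℝ → ℝ, MemLp v 2 volume → (∀ x, v (-x) = -v x) →
      ∀ x, Axi a ξ v (-x) = -Axi a ξ v x) ∧
    (∀ v : ℝ → ℝ, coneN v → coneN (Axi a ξ v)) ∧
    (∀ u : ℝ → ℝ, coneU u → coneU (Axi a ξ u)) := by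
  have ha : a.Even := hk.even
  obtain ⟨C, hC⟩ := hk.bounded
  have h_even : ∀ v : ℝ → ℝ, v.Even → (Axi a ξ v).Even := fun v hv =>
    (chi_even ξ).mul_even (ha.conv_even ((chi_even ξ).mul_even hv))
  have h_odd : ∀ v : ℝ → ℝ, v.Odd → (Axi a ξ v).Odd := fun v hv =>
    (chi_even ξ).mul_odd (ha.conv_odd ((chi_even ξ).mul_odd hv))
  refine ⟨fun v _ => h_even v, fun v _ => h_odd v, ?_, ?_⟩
  · rintro v ⟨hv2, hvo, hvn⟩
    have h_conv : ∀ x, 0 < x → conv a (chi ξ * v) x ≤ 0 := fun x =>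
      conv_nonpos_of_odd hk.memL2 ha hk.antitone (hv2.mul (memLp_top_chi ξ))
        ((chi_even ξ).mul_odd hvo)
        (fun y hy => mul_nonpos_of_nonneg_of_nonpos (chi_nonneg ξ y) (hvn y hy))
    exact ⟨memLp_two_Axi hk.integrable.1 hC ξ hv2, h_odd v hvo,
      fun x hx => mul_nonpos_of_nonneg_of_nonpos (chi_nonneg ξ x) (h_conv x hx)⟩
  · rintro u ⟨hu2, hue, hun, hum⟩
    have hw : ∀ x, 0 ≤ (chi ξ * u) x := fun x => mul_nonneg (chi_nonneg ξ x) (hun x)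
    have h_conv : ∀ x, 0 ≤ conv a (chi ξ * u) x := conv_nonneg hk.nonneg hw
    exact ⟨memLp_two_Axi hk.integrable.1 hC ξ hu2, h_even u hue,
      fun x => mul_nonneg (chi_nonneg ξ x) (h_conv x),
      antitoneOn_chi_mul h_conv (antitoneOn_conv hk.memL2 ha hk.antitone
        (hu2.mul (memLp_top_chi ξ)) ((chi_even ξ).mul_even hue) (antitoneOn_chi_mul hun hum))⟩

/-- For every `ξ ∈ (0,∞)`, the operator `A_ξ` respects even–odd parity
(it maps even functions to even functions and odd functions to odd functions), and the
convex cones `𝒩` and `𝒰` are invariant under `A_ξ`. -/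
theorem stmt1 (a : ℝ → ℝ) (hk : KernelHyp a) (ξ : ℝ) (hξ : 0 < ξ) :
    (∀ v : ℝ → ℝ, MemLp v 2 volume → (∀ x, v (-x) = v x) →
      ∀ x, Axi a ξ v (-x) = Axi a ξ v x) ∧
    (∀ v : ℝ → ℝ, MemLp v 2 volume → (∀ x, v (-x) = -v x) →
      ∀ x, Axi a ξ v (-x) = -Axi a ξ v x) ∧
    (∀ v : ℝ → ℝ, coneN v → coneN (Axi a ξ v)) ∧
    (∀ u : ℝ → ℝ, coneU u → coneU (Axi a ξ u)) :=
  stmt1_general a hk ξ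
end
end

section
/- If σ ≥ ζ + η, then the equation σ u = a ∗ f(u) has no nontrivial nonnegative solution u ∈ L²(ℝ): any nonnegative u ∈ L²(ℝ) satisfying σ u = a ∗ f(u) with σ ≥ ζ + η must vanish almost everywhere. This follows since ‖a ∗ f(u)‖₂ ≤ ‖a‖₁ ‖f(u)‖₂ ≤ (ζ + η)‖u‖₂, with strict inequality for nontrivial nonnegative u. -/
/-!
Young's inequality `‖a ∗ g‖₂ ≤ ‖a‖₁ ‖g‖₂`, applied in `ℝ≥0∞` to the positive parts, gives
`‖σ u‖₂ ≤ ‖f(u)‖₂`. Since `f(u) ≤ σ u` pointwise and `‖σ u‖₂ < ∞`, this forces `f(u) = σ u` a.e.;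
but `f(r) < (ζ + η) r ≤ σ r` for `r > 0` because `θ > 0`, so `u` vanishes a.e.
-/

open MeasureTheory Filter Set

noncomputable section

open scoped ENNReal

theorem ENNReal.lintegral_mul_sq_le {α : Type*} [MeasurableSpace α] {μ : Measure α}
    {w f : α → ℝ≥0∞} (hw : AEMeasurable w μ) (hf : AEMeasurable f μ) :
    (∫⁻ a, w a * f a ∂μ) ^ 2 ≤ (∫⁻ a, w a ∂μ) * ∫⁻ a, w a * f a ^ 2 ∂μ := by
  have half : ((2 : ℕ) : ℝ)⁻¹ + ((2 : ℕ) : ℝ)⁻¹ = 1 := by norm_num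
  have h := ENNReal.lintegral_mul_norm_pow_le hw (hw.mul (hf.pow_const 2))
    (by positivity) (by positivity) half
  have hsqrt : ∀ a, w a ^ ((2 : ℕ) : ℝ)⁻¹ * (w a * f a ^ 2) ^ ((2 : ℕ) : ℝ)⁻¹ = w a * f a := by
    intro a
    rw [ENNReal.mul_rpow_of_nonneg _ _ (by positivity), ENNReal.pow_rpow_inv_natCast two_ne_zero,
      ← mul_assoc, ← ENNReal.rpow_add_of_nonneg _ _ (by positivity) (by positivity), half,
      ENNReal.rpow_one]
  simp only [Pi.mul_apply, hsqrt] at h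
  calc (∫⁻ a, w a * f a ∂μ) ^ 2
      ≤ ((∫⁻ a, w a ∂μ) ^ ((2 : ℕ) : ℝ)⁻¹ * (∫⁻ a, w a * f a ^ 2 ∂μ) ^ ((2 : ℕ) : ℝ)⁻¹) ^ 2 := by
        gcongr
    _ = (∫⁻ a, w a ∂μ) * ∫⁻ a, w a * f a ^ 2 ∂μ := by
        rw [mul_pow, ENNReal.rpow_inv_natCast_pow two_ne_zero,
          ENNReal.rpow_inv_natCast_pow two_ne_zero]

theorem ofReal_integral_le_lintegral_ofReal {α : Type*} [MeasurableSpace α] {μ : Measure α}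
    (f : α → ℝ) : ENNReal.ofReal (∫ x, f x ∂μ) ≤ ∫⁻ x, ENNReal.ofReal (f x) ∂μ := by
  by_cases hf : Integrable f μ
  · calc ENNReal.ofReal (∫ x, f x ∂μ) ≤ ENNReal.ofReal (∫ x, max (f x) 0 ∂μ) :=
          ENNReal.ofReal_le_ofReal (integral_mono hf hf.pos_part fun x => le_max_left _ _)
      _ = ∫⁻ x, ENNReal.ofReal (f x) ∂μ := by
          rw [ofReal_integral_eq_lintegral_ofReal hf.pos_part
            (Eventually.of_forall fun x => le_max_right _ _)]
          simp
  · simp [integral_undef hf]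

section Young

variable {G : Type*} [MeasurableSpace G] [AddGroup G] [MeasurableAdd₂ G] [MeasurableNeg G]
  {μ : Measure G} [SFinite μ] [μ.IsAddLeftInvariant] [μ.IsAddRightInvariant] [μ.IsNegInvariant]

theorem lintegral_conv_sq_le {A F : G → ℝ≥0∞} (hA : AEMeasurable A μ) (hF : AEMeasurable F μ) :
    ∫⁻ x, (∫⁻ y, A (x - y) * F y ∂μ) ^ 2 ∂μ ≤ (∫⁻ x, A x ∂μ) ^ 2 * ∫⁻ y, F y ^ 2 ∂μ := by
  have hprod : AEMeasurable (fun p : G × G => A (p.1 - p.2) * F p.2 ^ 2) (μ.prod μ) :=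
    (hA.comp_quasiMeasurePreserving (quasiMeasurePreserving_sub μ μ)).mul
      ((hF.pow_const 2).comp_quasiMeasurePreserving Measure.quasiMeasurePreserving_snd)
  calc ∫⁻ x, (∫⁻ y, A (x - y) * F y ∂μ) ^ 2 ∂μ
      ≤ ∫⁻ x, (∫⁻ x, A x ∂μ) * ∫⁻ y, A (x - y) * F y ^ 2 ∂μ ∂μ := by
        refine lintegral_mono fun x => ?_
        have := ENNReal.lintegral_mul_sq_le (w := fun y => A (x - y))
          (hA.comp_quasiMeasurePreserving (quasiMeasurePreserving_sub_left μ x)) hF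
        rwa [lintegral_sub_left_eq_self A x] at this
    _ = (∫⁻ x, A x ∂μ) * ∫⁻ y, ∫⁻ x, A (x - y) * F y ^ 2 ∂μ ∂μ := by
        rw [lintegral_const_mul'' _ hprod.lintegral_prod_right', lintegral_lintegral_swap hprod]
    _ = (∫⁻ x, A x ∂μ) ^ 2 * ∫⁻ y, F y ^ 2 ∂μ := by
        have hinner : ∀ y, ∫⁻ x, A (x - y) * F y ^ 2 ∂μ = (∫⁻ x, A x ∂μ) * F y ^ 2 := fun y => by
          rw [lintegral_mul_const'' _ (f := fun x => A (x - y)) (hA.comp_quasiMeasurePreserving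
            (measurePreserving_sub_right μ y).quasiMeasurePreserving),
            lintegral_sub_right_eq_self A]
        rw [lintegral_congr hinner, lintegral_const_mul'' _ (hF.pow_const 2), sq, mul_assoc]

end Young

theorem lintegral_ofReal_conv_sq_le {a g : ℝ → ℝ} (ha : Integrable a) (ha0 : ∀ x, 0 ≤ a x)
    (hg : AEMeasurable g) :
    ∫⁻ x, ENNReal.ofReal (conv a g x) ^ 2
      ≤ ENNReal.ofReal (∫ x, a x) ^ 2 * ∫⁻ y, ENNReal.ofReal (g y) ^ 2 := by
  have hpointwise : ∀ x, ENNReal.ofReal (conv a g x)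
      ≤ ∫⁻ y, ENNReal.ofReal (a (x - y)) * ENNReal.ofReal (g y) := fun x => by
    simp_rw [← ENNReal.ofReal_mul (ha0 _)]
    exact ofReal_integral_le_lintegral_ofReal _
  calc ∫⁻ x, ENNReal.ofReal (conv a g x) ^ 2
      ≤ ∫⁻ x, (∫⁻ y, ENNReal.ofReal (a (x - y)) * ENNReal.ofReal (g y)) ^ 2 :=
        lintegral_mono fun x => by gcongr; exact hpointwise x
    _ ≤ (∫⁻ x, ENNReal.ofReal (a x)) ^ 2 * ∫⁻ y, ENNReal.ofReal (g y) ^ 2 :=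
        lintegral_conv_sq_le ha.aemeasurable.ennreal_ofReal hg.ennreal_ofReal
    _ = ENNReal.ofReal (∫ x, a x) ^ 2 * ∫⁻ y, ENNReal.ofReal (g y) ^ 2 := by
        rw [ofReal_integral_eq_lintegral_ofReal ha (Eventually.of_forall ha0)]

theorem MeasureTheory.MemLp.lintegral_ofReal_sq_ne_top {α : Type*} [MeasurableSpace α]
    {μ : Measure α} {v : α → ℝ} (hv : MemLp v 2 μ) : ∫⁻ x, ENNReal.ofReal (v x) ^ 2 ∂μ ≠ ⊤ := by
  refine ne_top_of_le_ne_top hv.integrable_sq.hasFiniteIntegral.ne (lintegral_mono fun x => ?_)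
  rw [enorm_pow]
  gcongr
  exact Real.ofReal_le_enorm _

section Bilinear

variable {ζ θ η σ r : ℝ}

theorem continuous_bilin : Continuous (bilin ζ θ η) := by
  unfold bilin
  fun_prop

theorem bilin_le_mul (hθ : 0 ≤ θ) (hη : 0 ≤ η) (hσ : ζ + η ≤ σ) (hr : 0 ≤ r) :
    bilin ζ θ η r ≤ σ * r := by
  have : max (r - θ) 0 ≤ r := max_le (by linarith) hr
  unfold bilin
  nlinarith

theorem bilin_lt_mul (hθ : 0 < θ) (hη : 0 < η) (hσ : ζ + η ≤ σ) (hr : 0 < r) :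
    bilin ζ θ η r < σ * r := by
  have : max (r - θ) 0 < r := max_lt (by linarith) hr
  unfold bilin
  nlinarith

end Bilinear

theorem stmt16_general (a : ℝ → ℝ) (hk : KernelHyp a)
    (ζ θ η σ : ℝ) (hζ : 0 ≤ ζ) (hθ : 0 < θ) (hη : 0 < η) (hσ : ζ + η ≤ σ)
    (u : ℝ → ℝ) (hu : MemLp u 2 volume) (hupos : ∀ x, 0 ≤ u x)
    (heq : (fun x => σ * u x) =ᵐ[volume] conv a (fun y => bilin ζ θ η (u y))) :
    u =ᵐ[volume] (0 : ℝ → ℝ) := by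
  set g := fun y => bilin ζ θ η (u y)
  have hσ0 : 0 < σ := by linarith
  have hg : AEMeasurable g := continuous_bilin.measurable.comp_aemeasurable hu.1.aemeasurable
  have hσu : AEMeasurable fun x => ENNReal.ofReal (σ * u x) ^ 2 :=
    ((hu.const_mul σ).1.aemeasurable.ennreal_ofReal).pow_const 2
  have hsq_le : ∀ y, ENNReal.ofReal (g y) ^ 2 ≤ ENNReal.ofReal (σ * u y) ^ 2 := fun y => by
    gcongr
    exact bilin_le_mul hθ.le hη.le hσ (hupos y)
  have hyoung : ∫⁻ x, ENNReal.ofReal (σ * u x) ^ 2 ≤ ∫⁻ y, ENNReal.ofReal (g y) ^ 2 :=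
    calc ∫⁻ x, ENNReal.ofReal (σ * u x) ^ 2 = ∫⁻ x, ENNReal.ofReal (conv a g x) ^ 2 :=
          lintegral_congr_ae (heq.fun_comp fun r => ENNReal.ofReal r ^ 2)
      _ ≤ ENNReal.ofReal (∫ x, a x) ^ 2 * ∫⁻ y, ENNReal.ofReal (g y) ^ 2 :=
          lintegral_ofReal_conv_sq_le hk.integrable hk.nonneg hg
      _ = ∫⁻ y, ENNReal.ofReal (g y) ^ 2 := by simp [hk.mass_one]
  have hfin : ∫⁻ y, ENNReal.ofReal (g y) ^ 2 ≠ ⊤ :=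
    ne_top_of_le_ne_top (hu.const_mul σ).lintegral_ofReal_sq_ne_top (lintegral_mono hsq_le)
  have hsq_eq := ae_eq_of_ae_le_of_lintegral_le (ae_of_all _ hsq_le) hfin hσu hyoung
  filter_upwards [hsq_eq] with x hx
  by_contra hne
  have hux : 0 < u x := (hupos x).lt_of_ne (Ne.symm hne)
  have hlt : ENNReal.ofReal (g x) < ENNReal.ofReal (σ * u x) :=
    (ENNReal.ofReal_lt_ofReal_iff (mul_pos hσ0 hux)).2 (bilin_lt_mul hθ hη hσ hux)
  exact ((ENNReal.pow_lt_pow_left_iff two_ne_zero).2 hlt).ne hx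

/-- If `σ ≥ ζ + η`, then the equation `σ u = a ∗ f(u)` has no nontrivial
nonnegative solution `u ∈ L²(ℝ)`: any nonnegative `u ∈ L²(ℝ)` satisfying
`σ u = a ∗ f(u)` with `σ ≥ ζ + η` must vanish almost everywhere. -/
theorem stmt16 (a : ℝ → ℝ) (hk : KernelHyp a) (hs : StrictKernel a)
    (ζ θ η σ : ℝ) (hζ : 0 ≤ ζ) (hθ : 0 < θ) (hη : 0 < η) (hσ : ζ + η ≤ σ)
    (u : ℝ → ℝ) (hu : MemLp u 2 volume) (hupos : ∀ x, 0 ≤ u x)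
    (heq : (fun x => σ * u x) =ᵐ[volume] conv a (fun y => bilin ζ θ η (u y))) :
    u =ᵐ[volume] (0 : ℝ → ℝ) :=
  stmt16_general a hk ζ θ η σ hζ hθ hη hσ u hu hupos heq
end
end

section
/- If ζ > 0 and σ ≤ ζ, then the equation σ u = a ∗ f(u) has no nontrivial nonnegative solution u ∈ L¹(ℝ) ∩ L²(ℝ): any nonnegative u ∈ L¹(ℝ) ∩ L²(ℝ) with σ u = a ∗ f(u) and σ ≤ ζ vanishes almost everywhere. The proof uses the integral identity σ ∫_ℝ u(x) dx = ∫_ℝ f(u(x)) dx together with f(r) ≥ ζ r for r ≥ 0. -/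
open MeasureTheory Filter Set

noncomputable section

/-! Integrating `σ u = a ∗ f(u)` over `ℝ` gives `σ ∫ u = ζ ∫ u + η ∫ (u - θ)₊`, so for `σ ≤ ζ`
either `∫ u = 0`, or `σ = ζ`, `u ≤ θ` a.e. and hence `u = a ∗ u`. In the second case the cosine
transform of the fixed-point equation reads `û(k) = â(k) û(k)` (`a` is even). Since `a ≥ 0` has
mass one and `cos (k z) = 1` only on a null set when `k ≠ 0`, `â(k) < 1` there, so `û` vanishes
off `0`; by continuity `∫ u = û(0) = 0`. -/

def cosTransform (f : ℝ → ℝ) (k : ℝ) : ℝ := ∫ x, f x * Real.cos (k * x)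

section Convolution

variable {a w : ℝ → ℝ}

theorem integrable_mul_cos (ha : Integrable a) (k : ℝ) :
    Integrable (fun x => a x * Real.cos (k * x)) :=
  ha.mul_bdd (by fun_prop : Continuous fun x : ℝ => Real.cos (k * x)).aestronglyMeasurable
    (Eventually.of_forall fun x => by simpa using Real.abs_cos_le_one (k * x))

theorem integral_conv_mul (ha : Integrable a) (hw : Integrable w) {g : ℝ → ℝ} {C : ℝ}
    (hg : AEStronglyMeasurable g) (hgC : ∀ x, |g x| ≤ C) :
    ∫ x, conv a w x * g x = ∫ y, w y * ∫ x, a (x - y) * g x := by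
  have hsub : Integrable (fun p : ℝ × ℝ => a (p.1 - p.2) * w p.2) (volume.prod volume) := by
    have hprod := ha.mul_prod hw
    simpa [Function.comp_def] using
      ((measurePreserving_sub_prod volume volume).integrable_comp
        hprod.aestronglyMeasurable).mpr hprod
  have hF : Integrable (Function.uncurry fun x y => g x * (a (x - y) * w y))
      (volume.prod volume) :=
    hsub.bdd_mul (c := C) hg.comp_fst (Eventually.of_forall fun p => hgC p.1)
  calc ∫ x, conv a w x * g x = ∫ x, ∫ y, g x * (a (x - y) * w y) := by
        simp only [conv, mul_comm _ (g _), ← integral_const_mul]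
    _ = ∫ y, ∫ x, g x * (a (x - y) * w y) := integral_integral_swap hF
    _ = ∫ y, w y * ∫ x, a (x - y) * g x := by
        simp only [← integral_const_mul]
        congr with y
        congr with x
        ring

theorem integral_conv (ha : Integrable a) (hw : Integrable w) :
    ∫ x, conv a w x = (∫ x, a x) * ∫ y, w y := by
  have h := integral_conv_mul ha hw (g := fun _ => 1) aestronglyMeasurable_const (C := 1)
    (fun _ => by norm_num)
  simp only [mul_one, integral_sub_right_eq_self] at h
  rw [h, integral_mul_const, mul_comm]

theorem conv_congr_ae {w' : ℝ → ℝ} (h : w =ᵐ[volume] w') :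
    conv a w = conv a w' :=
  funext fun x => integral_congr_ae (h.mono fun y hy => by simp only [hy])

theorem conv_const_mul (c : ℝ) :
    conv a (fun y => c * w y) = fun x => c * conv a w x := by
  funext x
  rw [conv, conv, ← integral_const_mul]
  congr with y
  ring

theorem integral_mul_sin_eq_zero_of_even (ha_even : ∀ x, a (-x) = a x) (k : ℝ) :
    ∫ x, a x * Real.sin (k * x) = 0 := by
  have h := integral_neg_eq_self (fun x => a x * Real.sin (k * x)) volume
  simp only [ha_even, mul_neg, Real.sin_neg, integral_neg] at h
  linarith

theorem integral_comp_sub_mul_cos (ha : Integrable a) (ha_even : ∀ x, a (-x) = a x)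
    (k y : ℝ) :
    ∫ x, a (x - y) * Real.cos (k * x) = cosTransform a k * Real.cos (k * y) := by
  have hsin : Integrable (fun x => a x * Real.sin (k * x)) :=
    ha.mul_bdd (by fun_prop : Continuous fun x : ℝ => Real.sin (k * x)).aestronglyMeasurable
      (Eventually.of_forall fun x => by simpa using Real.abs_sin_le_one (k * x))
  rw [← integral_add_right_eq_self _ y]
  simp only [add_sub_cancel_right, mul_add, Real.cos_add]
  calc ∫ x, a x * (Real.cos (k * x) * Real.cos (k * y) - Real.sin (k * x) * Real.sin (k * y))
      = ∫ x, (a x * Real.cos (k * x) * Real.cos (k * y)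
          - a x * Real.sin (k * x) * Real.sin (k * y)) := by
        congr with x
        ring
    _ = cosTransform a k * Real.cos (k * y)
        - (∫ x, a x * Real.sin (k * x)) * Real.sin (k * y) := by
        rw [integral_sub ((integrable_mul_cos ha k).mul_const _) (hsin.mul_const _),
          integral_mul_const, integral_mul_const, cosTransform]
    _ = cosTransform a k * Real.cos (k * y) := by
        rw [integral_mul_sin_eq_zero_of_even ha_even]
        ring

theorem cosTransform_conv (ha : Integrable a) (ha_even : ∀ x, a (-x) = a x)
    (hw : Integrable w) (k : ℝ) :
    cosTransform (conv a w) k = cosTransform a k * cosTransform w k := by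
  have hcos : AEStronglyMeasurable fun x : ℝ => Real.cos (k * x) :=
    (by fun_prop : Continuous fun x : ℝ => Real.cos (k * x)).aestronglyMeasurable
  calc cosTransform (conv a w) k = ∫ y, w y * ∫ x, a (x - y) * Real.cos (k * x) :=
        integral_conv_mul ha hw hcos (C := 1) (fun x => Real.abs_cos_le_one _)
    _ = ∫ y, cosTransform a k * (w y * Real.cos (k * y)) := by
        congr with y
        rw [integral_comp_sub_mul_cos ha ha_even]
        ring
    _ = cosTransform a k * cosTransform w k := integral_const_mul _ _

end Convolution

theorem continuous_cosTransform {u : ℝ → ℝ} (hu : Integrable u) :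
    Continuous (cosTransform u) :=
  continuous_of_dominated (fun k => (integrable_mul_cos hu k).aestronglyMeasurable)
    (fun k => Eventually.of_forall fun x => by
      simpa [abs_mul] using mul_le_of_le_one_right (abs_nonneg (u x)) (Real.abs_cos_le_one (k * x)))
    hu.abs (Eventually.of_forall fun x => by fun_prop)

theorem cosTransform_zero (u : ℝ → ℝ) : cosTransform u 0 = ∫ x, u x := by
  simp [cosTransform]

theorem ae_cos_mul_ne_one {k : ℝ} (hk : k ≠ 0) : ∀ᵐ x : ℝ, Real.cos (k * x) ≠ 1 := by
  have hsub : {x : ℝ | Real.cos (k * x) = 1} ⊆ range fun n : ℤ => n * (2 * Real.pi) / k := by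
    intro x hx
    obtain ⟨n, hn⟩ := (Real.cos_eq_one_iff _).1 hx
    exact ⟨n, by simp only [hn, mul_div_cancel_left₀ _ hk]⟩
  refine measure_mono_null (fun x hx => hsub ?_) ((countable_range _).measure_zero _)
  simpa using hx

theorem cosTransform_lt_one {a : ℝ → ℝ} (ha : Integrable a) (ha_nonneg : ∀ x, 0 ≤ a x)
    (ha_one : ∫ x, a x = 1) {k : ℝ} (hk : k ≠ 0) : cosTransform a k < 1 := by
  set g : ℝ → ℝ := fun x => a x * (1 - Real.cos (k * x))
  have hg : Integrable g :=
    (ha.sub (integrable_mul_cos ha k)).congr (Eventually.of_forall fun x => by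
      simp only [g, Pi.sub_apply]; ring)
  have hg_nonneg : ∀ x, 0 ≤ g x := fun x =>
    mul_nonneg (ha_nonneg x) (sub_nonneg.2 (Real.cos_le_one _))
  have hg_int : ∫ x, g x = 1 - cosTransform a k := by
    simp only [g, mul_sub, mul_one]
    rw [integral_sub ha (integrable_mul_cos ha k), ha_one, cosTransform]
  suffices 0 < ∫ x, g x by linarith
  have ha_supp : 0 < volume (Function.support a) :=
    (integral_pos_iff_support_of_nonneg ha_nonneg ha).1 (by rw [ha_one]; exact one_pos)
  rw [integral_pos_iff_support_of_nonneg hg_nonneg hg]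
  refine ha_supp.trans_le (measure_mono_ae ?_)
  filter_upwards [ae_cos_mul_ne_one hk] with x hx hax
  exact mul_ne_zero hax (sub_ne_zero.2 (Ne.symm hx))

theorem integral_eq_zero_of_ae_eq_conv {a u : ℝ → ℝ} (ha : Integrable a)
    (ha_even : ∀ x, a (-x) = a x) (ha_nonneg : ∀ x, 0 ≤ a x) (ha_one : ∫ x, a x = 1)
    (hu : Integrable u) (hfix : u =ᵐ[volume] conv a u) : ∫ x, u x = 0 := by
  have hvanish : ∀ k ∈ ({0}ᶜ : Set ℝ), cosTransform u k = 0 := fun k hk => by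
    have hmul : cosTransform u k = cosTransform a k * cosTransform u k := by
      rw [← cosTransform_conv ha ha_even hu]
      exact integral_congr_ae (hfix.mono fun x hx => by simp only [hx])
    by_contra hne
    have h1 : cosTransform a k = 1 := mul_right_cancel₀ hne (by rw [← hmul, one_mul])
    exact (cosTransform_lt_one ha ha_nonneg ha_one hk).ne h1
  have hzero : cosTransform u = 0 :=
    Continuous.ext_on (dense_compl_singleton 0) (continuous_cosTransform hu) continuous_const
      hvanish
  rw [← cosTransform_zero, hzero, Pi.zero_apply]

section Bilin

variable {ζ θ η : ℝ} {u : ℝ → ℝ}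

theorem bilin_of_le {r : ℝ} (h : r ≤ θ) : bilin ζ θ η r = ζ * r := by
  simp [bilin, sub_nonpos.2 h]

theorem integrable_max_sub (hu : Integrable u) (hθ : 0 ≤ θ) :
    Integrable fun x => max (u x - θ) 0 :=
  hu.abs.mono' ((continuous_id.sub continuous_const).max continuous_const
    |>.comp_aestronglyMeasurable hu.1)
    (Eventually.of_forall fun x => by
      rw [Real.norm_eq_abs, abs_of_nonneg (le_max_right _ _)]
      exact max_le (by linarith [le_abs_self (u x)]) (abs_nonneg _))

theorem integrable_bilin (hu : Integrable u) (hθ : 0 ≤ θ) :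
    Integrable fun x => bilin ζ θ η (u x) :=
  (hu.const_mul ζ).add ((integrable_max_sub hu hθ).const_mul η)

theorem integral_bilin (hu : Integrable u) (hθ : 0 ≤ θ) :
    ∫ x, bilin ζ θ η (u x) = ζ * (∫ x, u x) + η * ∫ x, max (u x - θ) 0 := by
  simp only [bilin]
  rw [integral_add (hu.const_mul ζ) ((integrable_max_sub hu hθ).const_mul η),
    integral_const_mul, integral_const_mul]

theorem mul_integral_eq_of_ae_eq_conv_bilin {a : ℝ → ℝ} {σ : ℝ} (ha : Integrable a)
    (ha_one : ∫ x, a x = 1) (hu : Integrable u) (hθ : 0 ≤ θ)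
    (heq : (fun x => σ * u x) =ᵐ[volume] conv a (fun y => bilin ζ θ η (u y))) :
    σ * ∫ x, u x = ζ * (∫ x, u x) + η * ∫ x, max (u x - θ) 0 := by
  rw [← integral_const_mul, integral_congr_ae heq, integral_conv ha (integrable_bilin hu hθ),
    ha_one, one_mul, integral_bilin hu hθ]

end Bilin

theorem stmt17_general (a : ℝ → ℝ) (hk : KernelHyp a)
    (ζ θ η σ : ℝ) (hζ : 0 < ζ) (hθ : 0 < θ) (hη : 0 < η) (hσ : σ ≤ ζ)
    (u : ℝ → ℝ) (hu1 : Integrable u) (hupos : ∀ x, 0 ≤ u x)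
    (heq : (fun x => σ * u x) =ᵐ[volume] conv a (fun y => bilin ζ θ η (u y))) :
    u =ᵐ[volume] (0 : ℝ → ℝ) := by
  have hmass := mul_integral_eq_of_ae_eq_conv_bilin hk.integrable hk.mass_one hu1 hθ.le heq
  have hu_int_nonneg : 0 ≤ ∫ x, u x := integral_nonneg hupos
  have hm_nonneg : ∀ x, 0 ≤ max (u x - θ) 0 := fun x => le_max_right _ _
  have hm_int_nonneg : 0 ≤ ∫ x, max (u x - θ) 0 := integral_nonneg hm_nonneg
  have hm_int_zero : ∫ x, max (u x - θ) 0 = 0 := by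
    nlinarith [mul_le_mul_of_nonneg_right hσ hu_int_nonneg]
  refine (integral_eq_zero_iff_of_nonneg hupos hu1).1 ?_
  rcases hσ.lt_or_eq with hlt | rfl
  · nlinarith
  · have hm_ae : (fun x => max (u x - θ) 0) =ᵐ[volume] 0 :=
      (integral_eq_zero_iff_of_nonneg hm_nonneg (integrable_max_sub hu1 hθ.le)).1 hm_int_zero
    have hle : ∀ᵐ x, u x ≤ θ := hm_ae.mono fun x hx => sub_nonpos.1 (max_eq_right_iff.1 hx)
    have hconv : conv a (fun y => bilin σ θ η (u y)) = fun x => σ * conv a u x := by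
      rw [conv_congr_ae (hle.mono fun y hy => bilin_of_le hy), conv_const_mul]
    refine integral_eq_zero_of_ae_eq_conv hk.integrable hk.even hk.nonneg hk.mass_one hu1 ?_
    filter_upwards [heq] with x hx
    exact mul_left_cancel₀ hζ.ne' (by rw [hx, hconv])

/-- If `ζ > 0` and `σ ≤ ζ`, then the equation `σ u = a ∗ f(u)` has no
nontrivial nonnegative solution `u ∈ L¹(ℝ) ∩ L²(ℝ)`: any nonnegative
`u ∈ L¹(ℝ) ∩ L²(ℝ)` with `σ u = a ∗ f(u)` and `σ ≤ ζ` vanishes almost everywhere. -/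
theorem stmt17 (a : ℝ → ℝ) (hk : KernelHyp a) (hs : StrictKernel a)
    (ζ θ η σ : ℝ) (hζ : 0 < ζ) (hθ : 0 < θ) (hη : 0 < η) (hσ : σ ≤ ζ)
    (u : ℝ → ℝ) (hu1 : Integrable u) (hu2 : MemLp u 2 volume) (hupos : ∀ x, 0 ≤ u x)
    (heq : (fun x => σ * u x) =ᵐ[volume] conv a (fun y => bilin ζ θ η (u y))) :
    u =ᵐ[volume] (0 : ℝ → ℝ) :=
  stmt17_general a hk ζ θ η σ hζ hθ hη hσ u hu1 hupos heq
end
end
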